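/- arXiv:1207.0352 — 5 statements merged into one kernel-verified Lean document; each statement's English description precedes it below -/
import Mathlib

section
/- Let α : ℝ^N → (ℝ^N →L[ℝ] ℝ) be a smooth 1-form, Γ : ℝ × ℝ → ℝ^N a smooth variation, γ(t) = Γ(t,0), δγ(t) = ∂Γ/∂s(t,0), and a < b real numbers. Then the function s ↦ ∫_a^b α(Γ(t,s))(∂Γ/∂t(t,s)) dt is differentiable at s = 0 with derivative ∫_a^b dα_{γ(t)}(δγ(t), γ'(t)) dt + α(γ(b))(δγ(b)) − α(γ(a))(δγ(a)). -/
set_option maxHeartbeats 1000000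


/-- First variation of the action (formula (2.4) of the paper): the function
`s ↦ ∫_a^b α(Γ(t,s))(∂Γ/∂t(t,s)) dt` is differentiable at `s = 0` with
derivative `∫_a^b dα_{γ(t)}(δγ(t), γ'(t)) dt + α(γ(b))(δγ(b)) − α(γ(a))(δγ(a))`. -/
theorem stmt_1 (N : ℕ)
    (α : (Fin N → ℝ) → ((Fin N → ℝ) →L[ℝ] ℝ))
    (hα : ContDiff ℝ (⊤ : ℕ∞) α)
    (Γ : ℝ × ℝ → (Fin N → ℝ))
    (hΓ : ContDiff ℝ (⊤ : ℕ∞) Γ)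
    (γ δγ : ℝ → (Fin N → ℝ))
    (hγ : ∀ t, γ t = Γ (t, 0))
    (hδγ : ∀ t, δγ t = deriv (fun s => Γ (t, s)) 0)
    (dα : (Fin N → ℝ) → (Fin N → ℝ) → (Fin N → ℝ) → ℝ)
    (hdα : ∀ x u v, dα x u v = fderiv ℝ α x u v - fderiv ℝ α x v u)
    (a b : ℝ) (hab : a < b) :
    HasDerivAt
      (fun s => ∫ t in a..b, α (Γ (t, s)) (deriv (fun t' => Γ (t', s)) t))
      ((∫ t in a..b, dα (γ t) (δγ t) (deriv γ t))
        + α (γ b) (δγ b) - α (γ a) (δγ a)) 0 := by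
  -- basic differentiability facts
  have hΓd : ∀ p : ℝ × ℝ, HasFDerivAt Γ (fderiv ℝ Γ p) p :=
    fun p => (hΓ.differentiable (by simp) p).hasFDerivAt
  have hΓ1 : ContDiff ℝ (⊤ : ℕ∞) (fderiv ℝ Γ) := hΓ.fderiv_right (m := (⊤ : ℕ∞)) (by simp)
  have hD2 : ∀ p : ℝ × ℝ, HasFDerivAt (fderiv ℝ Γ) (fderiv ℝ (fderiv ℝ Γ) p) p :=
    fun p => (hΓ1.differentiable (by simp) p).hasFDerivAt
  set f : ℝ × ℝ → ℝ := fun p => α (Γ p) (fderiv ℝ Γ p (1, 0)) with hf_def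
  have hG : ContDiff ℝ (⊤ : ℕ∞) (fun p : ℝ × ℝ => fderiv ℝ Γ p (1, 0)) :=
    hΓ1.clm_apply contDiff_const
  have hf : ContDiff ℝ (⊤ : ℕ∞) f := (hα.comp hΓ).clm_apply hG
  -- partial derivatives of Γ along the coordinate curves
  have lemA : ∀ (s t : ℝ), HasDerivAt (fun t' => Γ (t', s)) (fderiv ℝ Γ (t, s) (1, 0)) t := by
    intro s t
    have h := (hΓd (t, s)).comp_hasDerivAt t ((hasDerivAt_id t).prodMk (hasDerivAt_const t s))
    simpa [Function.comp_def] using h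
  have lemB : ∀ (t s : ℝ), HasDerivAt (fun s' => Γ (t, s')) (fderiv ℝ Γ (t, s) (0, 1)) s := by
    intro t s
    have h := (hΓd (t, s)).comp_hasDerivAt s ((hasDerivAt_const s t).prodMk (hasDerivAt_id s))
    simpa [Function.comp_def] using h
  -- identification of the curves
  set u : ℝ → (Fin N → ℝ) := fun t => fderiv ℝ Γ (t, 0) (0, 1) with hu_def
  set v : ℝ → (Fin N → ℝ) := fun t => fderiv ℝ Γ (t, 0) (1, 0) with hv_def
  set w : ℝ → (Fin N → ℝ) := fun t => fderiv ℝ (fderiv ℝ Γ) (t, 0) (1, 0) (0, 1) with hw_def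
  have hδγu : ∀ t, δγ t = u t := fun t => by rw [hδγ t, (lemB t 0).deriv]
  have hγ' : ∀ t, HasDerivAt γ (v t) t := by
    intro t
    have : γ = fun t => Γ (t, 0) := funext hγ
    rw [this]; exact lemA 0 t
  have hderivγ : ∀ t, deriv γ t = v t := fun t => (hγ' t).deriv
  -- derivative of δγ
  have hδγ' : ∀ t, HasDerivAt δγ (w t) t := by
    intro t
    have hδγfun : δγ = fun t => (fderiv ℝ Γ (t, 0)) (0, 1) := funext hδγu
    rw [hδγfun]
    have hc : HasDerivAt (fun t => fderiv ℝ Γ (t, 0)) (fderiv ℝ (fderiv ℝ Γ) (t, 0) (1, 0)) t := by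
      have h := (hD2 (t, 0)).comp_hasDerivAt t ((hasDerivAt_id t).prodMk (hasDerivAt_const t (0 : ℝ)))
      simpa [Function.comp_def] using h
    have h := hc.clm_apply (hasDerivAt_const t ((0 : ℝ × ℝ) + (0, 1)))
    simpa using hc.clm_apply (hasDerivAt_const t ((0, 1) : ℝ × ℝ))
  -- derivative of f in all directions
  have hfd : ∀ p : ℝ × ℝ, HasFDerivAt f
      (((α (Γ p)).comp ((fderiv ℝ (fderiv ℝ Γ) p).flip (1, 0))) +
        ((fderiv ℝ α (Γ p)).comp (fderiv ℝ Γ p)).flip (fderiv ℝ Γ p (1, 0))) p := by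
    intro p
    have hc : HasFDerivAt (fun q => α (Γ q)) ((fderiv ℝ α (Γ p)).comp (fderiv ℝ Γ p)) p :=
      ((hα.differentiable (by simp) (Γ p)).hasFDerivAt).comp p (hΓd p)
    have hu2 : HasFDerivAt (fun q => fderiv ℝ Γ q (1, 0))
        ((fderiv ℝ (fderiv ℝ Γ) p).flip (1, 0)) p := by
      have h := (hD2 p).clm_apply (hasFDerivAt_const ((1, 0) : ℝ × ℝ) p)
      simpa using h
    exact hc.clm_apply hu2
  -- the s-derivative of s ↦ f (t, s)
  have hfs : ∀ (t s : ℝ), HasDerivAt (fun s' => f (t, s')) (fderiv ℝ f (t, s) (0, 1)) s := by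
    intro t s
    have h := ((hf.differentiable (by simp) (t, s)).hasFDerivAt).comp_hasDerivAt s
      ((hasDerivAt_const s t).prodMk (hasDerivAt_id s))
    simpa [Function.comp_def] using h
  -- value of the s-derivative at s = 0
  have key : ∀ t : ℝ, fderiv ℝ f (t, 0) (0, 1)
      = dα (γ t) (δγ t) (deriv γ t)
        + (fderiv ℝ α (γ t) (v t) (δγ t) + α (γ t) (w t)) := by
    intro t
    have hsymm : fderiv ℝ (fderiv ℝ Γ) (t, 0) (0, 1) (1, 0) = w t :=
      second_derivative_symmetric hΓd (hD2 (t, 0)) _ _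
    rw [(hfd (t, 0)).fderiv]
    simp only [ContinuousLinearMap.add_apply, ContinuousLinearMap.comp_apply,
      ContinuousLinearMap.flip_apply, hsymm, hdα, hderivγ, hδγu, ← hγ]
    ring
  -- the function φ(t) = α(γ t)(δγ t) and its derivative
  set φ : ℝ → ℝ := fun t => α (γ t) (δγ t) with hφ_def
  have hφ' : ∀ t, HasDerivAt φ (fderiv ℝ α (γ t) (v t) (δγ t) + α (γ t) (w t)) t := by
    intro t
    have hc : HasDerivAt (fun t => α (γ t)) (fderiv ℝ α (γ t) (v t)) t :=
      ((hα.differentiable (by simp) (γ t)).hasFDerivAt).comp_hasDerivAt t (hγ' t)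
    exact hc.clm_apply (hδγ' t)
  -- continuity facts
  have hcurve : Continuous (fun t : ℝ => ((t, 0) : ℝ × ℝ)) := continuous_id.prodMk continuous_const
  have hγc : Continuous γ := by
    have : γ = fun t => Γ (t, 0) := funext hγ
    rw [this]; exact hΓ.continuous.comp hcurve
  have huc : Continuous u := ((hΓ1.continuous).comp hcurve).clm_apply continuous_const
  have hvc : Continuous v := ((hΓ1.continuous).comp hcurve).clm_apply continuous_const
  have hwc : Continuous w := by
    have hD2c : Continuous (fderiv ℝ (fderiv ℝ Γ)) := hΓ1.continuous_fderiv (by simp)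
    exact (((hD2c.comp hcurve).clm_apply continuous_const).clm_apply continuous_const)
  have hδγc : Continuous δγ := by
    have : δγ = u := funext hδγu
    rw [this]; exact huc
  have hfαc : Continuous (fderiv ℝ α) := hα.continuous_fderiv (by simp)
  have hPc : Continuous (fun t => dα (γ t) (δγ t) (deriv γ t)) := by
    have h1 : (fun t => dα (γ t) (δγ t) (deriv γ t))
        = fun t => fderiv ℝ α (γ t) (δγ t) (v t) - fderiv ℝ α (γ t) (v t) (δγ t) := by
      funext t; rw [hdα, hderivγ]
    rw [h1]
    exact ((((hfαc.comp hγc).clm_apply hδγc).clm_apply hvc).sub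
      (((hfαc.comp hγc).clm_apply hvc).clm_apply hδγc))
  have hφ'c : Continuous (fun t => fderiv ℝ α (γ t) (v t) (δγ t) + α (γ t) (w t)) :=
    ((((hfαc.comp hγc).clm_apply hvc).clm_apply hδγc).add
      (((hα.continuous.comp hγc)).clm_apply hwc))
  -- continuity of the full derivative integrand
  have hfderivc : Continuous (fun p : ℝ × ℝ => fderiv ℝ f p (0, 1)) :=
    (hf.continuous_fderiv (by simp)).clm_apply continuous_const
  -- compactness bound
  obtain ⟨C, hC⟩ : ∃ C, ∀ p ∈ (Set.uIcc a b ×ˢ Metric.closedBall (0 : ℝ) 1),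
      ‖fderiv ℝ f p (0, 1)‖ ≤ C := by
    rcases (isCompact_uIcc.prod (isCompact_closedBall (0 : ℝ) 1)).exists_bound_of_continuousOn
      hfderivc.continuousOn with ⟨C, hC⟩
    exact ⟨C, hC⟩
  -- differentiation under the integral sign
  have main := (intervalIntegral.hasDerivAt_integral_of_dominated_loc_of_deriv_le
    (F := fun s t => f (t, s)) (F' := fun s t => fderiv ℝ f (t, s) (0, 1))
    (x₀ := (0 : ℝ)) (a := a) (b := b) (μ := MeasureTheory.volume)
    (bound := fun _ => C) (Metric.ball_mem_nhds _ one_pos)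
    (Filter.Eventually.of_forall fun s =>
      ((hf.continuous.comp (continuous_id.prodMk continuous_const)).aestronglyMeasurable))
    ((hf.continuous.comp (continuous_id.prodMk continuous_const)).intervalIntegrable a b)
    ((hfderivc.comp (continuous_id.prodMk continuous_const)).aestronglyMeasurable)
    (Filter.Eventually.of_forall fun t ht s hs =>
      hC (t, s) ⟨Set.uIoc_subset_uIcc ht, Metric.ball_subset_closedBall hs⟩)
    (intervalIntegrable_const)
    (Filter.Eventually.of_forall fun t _ s _ => hfs t s)).2
  -- identify the function
  have hFeq : ∀ (s t : ℝ), α (Γ (t, s)) (deriv (fun t' => Γ (t', s)) t) = f (t, s) := by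
    intro s t; rw [(lemA s t).deriv]
  have hfun : (fun s => ∫ t in a..b, α (Γ (t, s)) (deriv (fun t' => Γ (t', s)) t))
      = fun s => ∫ t in a..b, f (t, s) := by
    funext s
    exact intervalIntegral.integral_congr fun t _ => hFeq s t
  rw [hfun]
  -- identify the value of the derivative
  have hval : (∫ t in a..b, fderiv ℝ f (t, 0) (0, 1))
      = (∫ t in a..b, dα (γ t) (δγ t) (deriv γ t)) + α (γ b) (δγ b) - α (γ a) (δγ a) := by
    have h1 : (∫ t in a..b, fderiv ℝ f (t, 0) (0, 1))
        = ∫ t in a..b, (dα (γ t) (δγ t) (deriv γ t)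
            + (fderiv ℝ α (γ t) (v t) (δγ t) + α (γ t) (w t))) :=
      intervalIntegral.integral_congr fun t _ => key t
    rw [h1, intervalIntegral.integral_add (hPc.intervalIntegrable a b)
      (hφ'c.intervalIntegrable a b)]
    have h2 : (∫ t in a..b, (fderiv ℝ α (γ t) (v t) (δγ t) + α (γ t) (w t)))
        = φ b - φ a :=
      intervalIntegral.integral_eq_sub_of_hasDerivAt (fun t _ => hφ' t)
        (hφ'c.intervalIntegrable a b)
    rw [h2]
    ring
  rw [← hval]
  exact main
end

section
/- Let α : ℝ^N → (ℝ^N →L[ℝ] ℝ) be a smooth 1-form, H : ℝ^N → ℝ a smooth function, h ∈ ℝ, and Γ : ℝ × ℝ → ℝ^N a smooth variation with H(Γ(t,s)) = h for all (t,s); set γ(t) = Γ(t,0) and δγ(t) = ∂Γ/∂s(t,0). Assume: (i) for every t ∈ [a,b] and every v ∈ ℝ^N with DH(γ(t))(v) = 0 one has dα_{γ(t)}(γ'(t), v) = 0 (i.e. γ' lies in the kernel of dα restricted to the level set of H); and (ii) α(γ(a))(δγ(a)) = 0 and α(γ(b))(δγ(b)) = 0. Then the derivative at s = 0 of s ↦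 ∫_a^b α(Γ(t,s))(∂Γ/∂t(t,s)) dt is zero. -/
/-- Flat version of the 'extremal' direction of Theorem 2.1 of the paper:
if the variation stays in the level set `H = h`, the velocity `γ'` lies in the
kernel of `dα` restricted to the level set, and `α(δγ)` vanishes at the
endpoints, then the first variation of the action vanishes. -/
theorem stmt_2 (N : ℕ)
    (α : (Fin N → ℝ) → ((Fin N → ℝ) →L[ℝ] ℝ))
    (hα : ContDiff ℝ (⊤ : ℕ∞) α)
    (H : (Fin N → ℝ) → ℝ)
    (hH : ContDiff ℝ (⊤ : ℕ∞) H)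
    (h : ℝ)
    (Γ : ℝ × ℝ → (Fin N → ℝ))
    (hΓ : ContDiff ℝ (⊤ : ℕ∞) Γ)
    (hlevel : ∀ t s : ℝ, H (Γ (t, s)) = h)
    (γ δγ : ℝ → (Fin N → ℝ))
    (hγ : ∀ t, γ t = Γ (t, 0))
    (hδγ : ∀ t, δγ t = deriv (fun s => Γ (t, s)) 0)
    (dα : (Fin N → ℝ) → (Fin N → ℝ) → (Fin N → ℝ) → ℝ)
    (hdα : ∀ x u v, dα x u v = fderiv ℝ α x u v - fderiv ℝ α x v u)
    (a b : ℝ) (hab : a < b)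
    (hker : ∀ t ∈ Set.Icc a b, ∀ v : Fin N → ℝ,
      fderiv ℝ H (γ t) v = 0 → dα (γ t) (deriv γ t) v = 0)
    (hend_a : α (γ a) (δγ a) = 0)
    (hend_b : α (γ b) (δγ b) = 0) :
    HasDerivAt
      (fun s => ∫ t in a..b, α (Γ (t, s)) (deriv (fun t' => Γ (t', s)) t))
      0 0 := by
  have hΓd : Differentiable ℝ Γ := hΓ.differentiable (by simp)
  set Φ : ℝ × ℝ → (ℝ × ℝ) →L[ℝ] (Fin N → ℝ) := fderiv ℝ Γ with hΦdef
  have hΦc : ContDiff ℝ (⊤ : ℕ∞) Φ := hΓ.fderiv_right (by simp)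
  have hΦd : Differentiable ℝ Φ := hΦc.differentiable (by simp)
  set u : ℝ × ℝ → (Fin N → ℝ) := fun p => Φ p (1, 0) with hu_def
  set w : ℝ × ℝ → (Fin N → ℝ) := fun p => Φ p (0, 1) with hw_def
  have hu : ContDiff ℝ (⊤ : ℕ∞) u := hΦc.clm_apply contDiff_const
  -- derivative of t' ↦ Γ (t', s)
  have hcurve_t : ∀ t s : ℝ, HasDerivAt (fun t' => Γ (t', s)) (u (t, s)) t := by
    intro t s
    have h1 : HasDerivAt (fun t' : ℝ => ((t' : ℝ), s)) (((1 : ℝ), (0 : ℝ))) t :=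
      (hasDerivAt_id t).prodMk (hasDerivAt_const t s)
    exact (hΓd (t, s)).hasFDerivAt.comp_hasDerivAt t h1
  -- derivative of s' ↦ Γ (t, s')
  have hcurve_s : ∀ t s : ℝ, HasDerivAt (fun s' => Γ (t, s')) (w (t, s)) s := by
    intro t s
    have h1 : HasDerivAt (fun s' : ℝ => ((t : ℝ), (s' : ℝ))) (((0 : ℝ), (1 : ℝ))) s :=
      (hasDerivAt_const s t).prodMk (hasDerivAt_id s)
    exact (hΓd (t, s)).hasFDerivAt.comp_hasDerivAt s h1
  set F : ℝ × ℝ → ℝ := fun p => α (Γ p) (u p) with hF_def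
  have hF : ContDiff ℝ (⊤ : ℕ∞) F := (hα.comp hΓ).clm_apply hu
  have hFd : Differentiable ℝ F := hF.differentiable (by simp)
  set G : ℝ × ℝ → ℝ := fun p => fderiv ℝ F p (0, 1) with hG_def
  have hGc : Continuous G := by
    have hGsm : ContDiff ℝ (⊤ : ℕ∞) G := (hF.fderiv_right (by simp)).clm_apply contDiff_const
    exact hGsm.continuous
  have hG : ∀ t s : ℝ, HasDerivAt (fun s' => F (t, s')) (G (t, s)) s := by
    intro t s
    have h1 : HasDerivAt (fun s' : ℝ => ((t : ℝ), (s' : ℝ))) (((0 : ℝ), (1 : ℝ))) s :=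
      (hasDerivAt_const s t).prodMk (hasDerivAt_id s)
    exact (hFd (t, s)).hasFDerivAt.comp_hasDerivAt s h1
  -- rewrite the target integrand
  have hfun : (fun s => ∫ t in a..b, α (Γ (t, s)) (deriv (fun t' => Γ (t', s)) t))
      = fun s => ∫ t in a..b, F (t, s) := by
    funext s
    apply intervalIntegral.integral_congr
    intro t _
    show α (Γ (t, s)) (deriv (fun t' => Γ (t', s)) t) = F (t, s)
    rw [(hcurve_t t s).deriv]
  rw [hfun]
  -- bound for G on a compact set
  obtain ⟨C, hC⟩ : ∃ C, ∀ p ∈ (Set.uIcc a b ×ˢ Set.Icc (-1 : ℝ) 1), ‖G p‖ ≤ C :=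
    (isCompact_uIcc.prod isCompact_Icc).exists_bound_of_continuousOn hGc.continuousOn
  -- differentiate under the integral sign
  have key := intervalIntegral.hasDerivAt_integral_of_dominated_loc_of_deriv_le
      (μ := MeasureTheory.volume) (F := fun s t => F (t, s)) (F' := fun s t => G (t, s))
      (x₀ := (0 : ℝ)) (a := a) (b := b) (bound := fun _ => C) (s := Metric.ball (0 : ℝ) 1) (Metric.ball_mem_nhds _ one_pos)
      (Filter.Eventually.of_forall fun x =>
        (hF.continuous.comp (continuous_id.prodMk continuous_const)).aestronglyMeasurable)
      ((hF.continuous.comp (continuous_id.prodMk continuous_const)).intervalIntegrable a b)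
      ((hGc.comp (continuous_id.prodMk continuous_const)).aestronglyMeasurable)
      (Filter.Eventually.of_forall fun t ht x hx => by
        refine hC (t, x) ⟨Set.uIoc_subset_uIcc ht, ?_⟩
        have := Metric.mem_ball.mp hx
        rw [Real.dist_eq, sub_zero] at this
        exact ⟨by linarith [abs_le.mp this.le], by linarith [abs_le.mp this.le]⟩)
      (intervalIntegrable_const)
      (Filter.Eventually.of_forall fun t ht x hx => hG t x)
  -- the derivative of the reduced action along the level set
  have hγfun : γ = fun t => Γ (t, 0) := funext hγ
  have hγderiv : ∀ t, deriv γ t = u (t, 0) := by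
    intro t
    rw [hγfun]
    exact (hcurve_t t 0).deriv
  have hδw : ∀ t, δγ t = w (t, 0) := by
    intro t
    rw [hδγ t, (hcurve_s t 0).deriv]
  set g : ℝ → ℝ := fun t => α (Γ (t, 0)) (w (t, 0)) with hg_def
  have hg_deriv : ∀ t ∈ Set.uIcc a b, HasDerivAt g (G (t, 0)) t := by
    intro t ht
    rw [Set.uIcc_of_le hab.le] at ht
    set p : ℝ × ℝ := (t, 0) with hp_def
    set Ψ : (ℝ × ℝ) →L[ℝ] (ℝ × ℝ) →L[ℝ] (Fin N → ℝ) := fderiv ℝ Φ p with hΨdef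
    have hΨ : HasFDerivAt Φ Ψ p := (hΦd p).hasFDerivAt
    have hΓp : HasFDerivAt Γ (Φ p) p := (hΓd p).hasFDerivAt
    have hαp : HasFDerivAt α (fderiv ℝ α (Γ p)) (Γ p) :=
      ((hα.differentiable (by simp)) (Γ p)).hasFDerivAt
    have hαΓ : HasFDerivAt (fun q => α (Γ q)) ((fderiv ℝ α (Γ p)).comp (Φ p)) p :=
      hαp.comp p hΓp
    have hu' : HasFDerivAt u (Ψ.flip ((1 : ℝ), (0 : ℝ))) p := by
      have h2 := hΨ.clm_apply (hasFDerivAt_const (((1 : ℝ), (0 : ℝ))) p)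
      simpa using h2
    have hw' : HasFDerivAt w (Ψ.flip ((0 : ℝ), (1 : ℝ))) p := by
      have h2 := hΨ.clm_apply (hasFDerivAt_const (((0 : ℝ), (1 : ℝ))) p)
      simpa using h2
    -- derivative of F at p
    have hF' : HasFDerivAt F
        ((α (Γ p)).comp (Ψ.flip ((1 : ℝ), (0 : ℝ)))
          + ((fderiv ℝ α (Γ p)).comp (Φ p)).flip (u p)) p := hαΓ.clm_apply hu'
    have hGval : G (t, 0) = α (Γ p) (Ψ (0, 1) (1, 0))
        + fderiv ℝ α (Γ p) (w p) (u p) := by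
      have := hF'.fderiv
      rw [hG_def]
      show fderiv ℝ F p (0, 1) = _
      rw [this]
      simp [hw_def]
    -- derivative of g at t
    have hW : HasFDerivAt (fun q => α (Γ q) (w q))
        ((α (Γ p)).comp (Ψ.flip ((0 : ℝ), (1 : ℝ)))
          + ((fderiv ℝ α (Γ p)).comp (Φ p)).flip (w p)) p := hαΓ.clm_apply hw'
    have hcurve : HasDerivAt (fun t' : ℝ => ((t' : ℝ), (0 : ℝ))) (((1 : ℝ), (0 : ℝ))) t :=
      (hasDerivAt_id t).prodMk (hasDerivAt_const t (0 : ℝ))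
    have hgd : HasDerivAt g
        (α (Γ p) (Ψ (1, 0) (0, 1)) + fderiv ℝ α (Γ p) (u p) (w p)) t := by
      have h3 := hW.comp_hasDerivAt t hcurve
      simpa [hu_def, Function.comp_def] using h3
    -- symmetry of second derivative
    have hsymm : Ψ (0, 1) (1, 0) = Ψ (1, 0) (0, 1) :=
      second_derivative_symmetric (fun y => (hΓd y).hasFDerivAt) hΨ _ _
    -- the kernel condition kills the antisymmetric part
    have hHw : fderiv ℝ H (γ t) (δγ t) = 0 := by
      have h1 : HasDerivAt (fun s => H (Γ (t, s)))
          (fderiv ℝ H (Γ (t, 0)) (w (t, 0))) 0 :=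
        ((hH.differentiable (by simp)) (Γ (t, 0))).hasFDerivAt.comp_hasDerivAt 0 (hcurve_s t 0)
      have h2 : (fun s : ℝ => H (Γ (t, s))) = fun _ => h := funext (hlevel t)
      rw [h2] at h1
      have h3 := (hasDerivAt_const (0 : ℝ) h).unique h1
      rw [hγ t, hδw t, ← h3]
    have hk := hker t ht (δγ t) hHw
    rw [hdα, hγderiv t, hγ t, hδw t] at hk
    have hcross : fderiv ℝ α (Γ (t, 0)) (w (t, 0)) (u (t, 0))
        = fderiv ℝ α (Γ (t, 0)) (u (t, 0)) (w (t, 0)) := by linarith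
    have : G (t, 0) = α (Γ p) (Ψ (1, 0) (0, 1)) + fderiv ℝ α (Γ p) (u p) (w p) := by
      rw [hGval, hsymm, hp_def] at *
      rw [hcross]
    rw [this]
    exact hgd
  have hGint : IntervalIntegrable (fun t => G (t, 0)) MeasureTheory.volume a b :=
    (hGc.comp (continuous_id.prodMk continuous_const)).intervalIntegrable a b
  have hint0 : (∫ t in a..b, G (t, 0)) = 0 := by
    rw [intervalIntegral.integral_eq_sub_of_hasDerivAt hg_deriv hGint]
    have hga : g a = 0 := by rw [hg_def]; simp only []; rw [← hγ a, ← hδw a]; exact hend_a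
    have hgb : g b = 0 := by rw [hg_def]; simp only []; rw [← hγ b, ← hδw b]; exact hend_b
    rw [hga, hgb, sub_zero]
  have k2 := key.2
  beta_reduce at k2
  rw [hint0] at k2
  exact k2
end

section
/- Let α₁, α₂ : ℝ^N → (ℝ^N →L[ℝ] ℝ) be smooth 1-forms with equal exterior derivatives, i.e. dα₁|_x = dα₂|_x as bilinear forms for every x ∈ ℝ^N. Let Γ : ℝ × ℝ → ℝ^N be a smooth variation with fixed endpoints, i.e. Γ(a,s) and Γ(b,s) do not depend on s. Then for every s, ∫_a^b α₁(Γ(t,s))(∂Γ/∂t(t,s)) dt − ∫_a^b α₁(Γ(t,0))(∂Γ/∂t(t,0)) dt = ∫_a^b α₂(Γ(t,s))(∂Γ/∂t(t,s)) dt − ∫_a^b α₂(Γ(t,0))(∂Γ/∂t(t,0)) dt. -/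
open intervalIntegral MeasureTheory Set Metric

section aux

variable {E : Type*} [NormedAddCommGroup E] [NormedSpace ℝ E]

lemma hasDerivAt_fst_slice (f : ℝ × ℝ → E) {t s : ℝ}
    (hf : DifferentiableAt ℝ f (t, s)) :
    HasDerivAt (fun t' => f (t', s)) (fderiv ℝ f (t, s) (1, 0)) t :=
  hf.hasFDerivAt.comp_hasDerivAt t ((hasDerivAt_id t).prodMk (hasDerivAt_const t s))

lemma hasDerivAt_snd_slice (f : ℝ × ℝ → E) {t s : ℝ}
    (hf : DifferentiableAt ℝ f (t, s)) :
    HasDerivAt (fun s' => f (t, s')) (fderiv ℝ f (t, s) (0, 1)) s :=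
  hf.hasFDerivAt.comp_hasDerivAt s ((hasDerivAt_const s t).prodMk (hasDerivAt_id s))

lemma key (β : E → (E →L[ℝ] ℝ)) (hβ : ContDiff ℝ (⊤ : ℕ∞) β)
    (hsymm : ∀ x u v, fderiv ℝ β x u v = fderiv ℝ β x v u)
    (Γ : ℝ × ℝ → E) (hΓ : ContDiff ℝ (⊤ : ℕ∞) Γ)
    (a b : ℝ)
    (hfa : ∀ s, Γ (a, s) = Γ (a, 0)) (hfb : ∀ s, Γ (b, s) = Γ (b, 0)) (s : ℝ) :
    (∫ t in a..b, β (Γ (t, s)) (fderiv ℝ Γ (t, s) (1, 0)))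
      = ∫ t in a..b, β (Γ (t, 0)) (fderiv ℝ Γ (t, 0) (1, 0)) := by
  have hΓd : Differentiable ℝ Γ := hΓ.differentiable (by simp)
  have hΦ : ContDiff ℝ (⊤ : ℕ∞) (fderiv ℝ Γ) := hΓ.fderiv_right (by simp)
  set P : ℝ × ℝ → ℝ := fun p => β (Γ p) (fderiv ℝ Γ p (1, 0)) with hPdef
  set Q : ℝ × ℝ → ℝ := fun p => β (Γ p) (fderiv ℝ Γ p (0, 1)) with hQdef
  have hP : ContDiff ℝ (⊤ : ℕ∞) P := (hβ.comp hΓ).clm_apply (hΦ.clm_apply contDiff_const)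
  have hQ : ContDiff ℝ (⊤ : ℕ∞) Q := (hβ.comp hΓ).clm_apply (hΦ.clm_apply contDiff_const)
  -- the key pointwise identity: ∂ₛ P = ∂ₜ Q
  have keyid : ∀ p : ℝ × ℝ, fderiv ℝ P p (0, 1) = fderiv ℝ Q p (1, 0) := by
    intro p
    have hc : DifferentiableAt ℝ (fun q => β (Γ q)) p :=
      ((hβ.comp hΓ).differentiable (by simp) p)
    have hΦd : DifferentiableAt ℝ (fderiv ℝ Γ) p := (hΦ.differentiable (by simp) p)
    have hu1 : DifferentiableAt ℝ (fun q => fderiv ℝ Γ q (1, 0)) p :=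
      hΦd.clm_apply (differentiableAt_const _)
    have hu2 : DifferentiableAt ℝ (fun q => fderiv ℝ Γ q (0, 1)) p :=
      hΦd.clm_apply (differentiableAt_const _)
    have hcd : fderiv ℝ (fun q => β (Γ q)) p
        = (fderiv ℝ β (Γ p)).comp (fderiv ℝ Γ p) :=
      fderiv_comp p (hβ.differentiable (by simp) _) (hΓd p)
    have hu1d : fderiv ℝ (fun q => fderiv ℝ Γ q (1, 0)) p
        = (fderiv ℝ (fderiv ℝ Γ) p).flip (1, 0) := by
      rw [fderiv_clm_apply hΦd (differentiableAt_const _)]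
      simp
    have hu2d : fderiv ℝ (fun q => fderiv ℝ Γ q (0, 1)) p
        = (fderiv ℝ (fderiv ℝ Γ) p).flip (0, 1) := by
      rw [fderiv_clm_apply hΦd (differentiableAt_const _)]
      simp
    have hsym2 : fderiv ℝ (fderiv ℝ Γ) p (0, 1) (1, 0)
        = fderiv ℝ (fderiv ℝ Γ) p (1, 0) (0, 1) :=
      second_derivative_symmetric (fun y => (hΓd y).hasFDerivAt) hΦd.hasFDerivAt _ _
    rw [hPdef, hQdef]
    rw [fderiv_clm_apply hc hu1, fderiv_clm_apply hc hu2]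
    simp only [ContinuousLinearMap.add_apply, ContinuousLinearMap.coe_comp',
      Function.comp_apply, ContinuousLinearMap.flip_apply, hcd, hu1d, hu2d]
    rw [hsym2, hsymm]
  -- derivative of the action in s is zero
  have hG : ∀ s₀ : ℝ, HasDerivAt (fun x => ∫ t in a..b, P (t, x)) 0 s₀ := by
    intro s₀
    have hPc : Continuous P := hP.continuous
    have hP' : Continuous fun p : ℝ × ℝ => fderiv ℝ P p (0, 1) :=
      (((hP.fderiv_right (by simp)).clm_apply contDiff_const : ContDiff ℝ (⊤ : ℕ∞) _)).continuous
    have hK : IsCompact ((uIcc a b) ×ˢ (closedBall s₀ 1)) :=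
      isCompact_uIcc.prod (isCompact_closedBall _ _)
    obtain ⟨C, hC⟩ := hK.exists_bound_of_continuousOn
      ((hP'.comp (continuous_id)).continuousOn)
    have main := intervalIntegral.hasDerivAt_integral_of_dominated_loc_of_deriv_le
      (F := fun x t => P (t, x)) (F' := fun x t => fderiv ℝ P (t, x) (0, 1))
      (x₀ := s₀) (s := ball s₀ 1) (bound := fun _ => C) (a := a) (b := b) (μ := volume)
      (ball_mem_nhds s₀ one_pos)
      (Filter.Eventually.of_forall fun x =>
        ((hPc.comp (continuous_id.prodMk continuous_const)).aestronglyMeasurable))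
      ((hPc.comp (continuous_id.prodMk continuous_const)).intervalIntegrable a b)
      ((hP'.comp (continuous_id.prodMk continuous_const)).aestronglyMeasurable)
      (Filter.Eventually.of_forall fun t ht x hx => by
        exact hC (t, x) ⟨uIoc_subset_uIcc ht, ball_subset_closedBall hx⟩)
      (intervalIntegrable_const)
      (Filter.Eventually.of_forall fun t ht x hx =>
        hasDerivAt_snd_slice P (hP.differentiable (by simp) (t, x)))
    have h2 := main.2
    have hval : (∫ t in a..b, fderiv ℝ P (t, s₀) (0, 1)) = 0 := by
      have e1 : (∫ t in a..b, fderiv ℝ P (t, s₀) (0, 1))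
          = ∫ t in a..b, fderiv ℝ Q (t, s₀) (1, 0) := by
        apply intervalIntegral.integral_congr
        intro t _
        exact keyid (t, s₀)
      have hQ' : Continuous fun p : ℝ × ℝ => fderiv ℝ Q p (1, 0) :=
        (((hQ.fderiv_right (by simp)).clm_apply contDiff_const : ContDiff ℝ (⊤ : ℕ∞) _)).continuous
      have e2 : (∫ t in a..b, fderiv ℝ Q (t, s₀) (1, 0)) = Q (b, s₀) - Q (a, s₀) :=
        intervalIntegral.integral_eq_sub_of_hasDerivAt
          (fun t _ => hasDerivAt_fst_slice Q (hQ.differentiable (by simp) (t, s₀)))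
          ((hQ'.comp (continuous_id.prodMk continuous_const)).intervalIntegrable a b)
      have hQa : Q (a, s₀) = 0 := by
        have h0 : fderiv ℝ Γ (a, s₀) (0, 1) = 0 := by
          have h1 : HasDerivAt (fun s' => Γ (a, s')) (fderiv ℝ Γ (a, s₀) (0, 1)) s₀ :=
            hasDerivAt_snd_slice Γ (hΓd (a, s₀))
          have h2 : HasDerivAt (fun _ : ℝ => Γ (a, 0)) (0 : E) s₀ := hasDerivAt_const _ _
          have : (fun s' => Γ (a, s')) = fun _ : ℝ => Γ (a, 0) := funext fun s' => hfa s'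
          rw [this] at h1
          exact h1.unique h2
        simp [hQdef, h0]
      have hQb : Q (b, s₀) = 0 := by
        have h0 : fderiv ℝ Γ (b, s₀) (0, 1) = 0 := by
          have h1 : HasDerivAt (fun s' => Γ (b, s')) (fderiv ℝ Γ (b, s₀) (0, 1)) s₀ :=
            hasDerivAt_snd_slice Γ (hΓd (b, s₀))
          have h2 : HasDerivAt (fun _ : ℝ => Γ (b, 0)) (0 : E) s₀ := hasDerivAt_const _ _
          have : (fun s' => Γ (b, s')) = fun _ : ℝ => Γ (b, 0) := funext fun s' => hfb s'
          rw [this] at h1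
          exact h1.unique h2
        simp [hQdef, h0]
      rw [e1, e2, hQa, hQb, sub_zero]
    rw [hval] at h2
    exact h2
  exact is_const_of_deriv_eq_zero (fun x => (hG x).differentiableAt)
    (fun x => (hG x).deriv) s 0

end aux

/-- Main observation of Section 3.2 of the paper: if two 1-forms `α₁, α₂` have
the same exterior derivative, then the change of their actions along a
fixed-endpoint variation is the same. -/
theorem stmt_3 (N : ℕ)
    (α₁ α₂ : (Fin N → ℝ) → ((Fin N → ℝ) →L[ℝ] ℝ))
    (hα₁ : ContDiff ℝ (⊤ : ℕ∞) α₁) (hα₂ : ContDiff ℝ (⊤ : ℕ∞) α₂)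
    (hdeq : ∀ x u v : Fin N → ℝ,
      fderiv ℝ α₁ x u v - fderiv ℝ α₁ x v u
        = fderiv ℝ α₂ x u v - fderiv ℝ α₂ x v u)
    (Γ : ℝ × ℝ → (Fin N → ℝ))
    (hΓ : ContDiff ℝ (⊤ : ℕ∞) Γ)
    (a b : ℝ) (hab : a < b)
    (hfix_a : ∀ s : ℝ, Γ (a, s) = Γ (a, 0))
    (hfix_b : ∀ s : ℝ, Γ (b, s) = Γ (b, 0)) :
    ∀ s : ℝ,
      (∫ t in a..b, α₁ (Γ (t, s)) (deriv (fun t' => Γ (t', s)) t))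
        - (∫ t in a..b, α₁ (Γ (t, 0)) (deriv (fun t' => Γ (t', 0)) t))
      = (∫ t in a..b, α₂ (Γ (t, s)) (deriv (fun t' => Γ (t', s)) t))
        - (∫ t in a..b, α₂ (Γ (t, 0)) (deriv (fun t' => Γ (t', 0)) t)) := by
  intro s
  have hΓd : Differentiable ℝ Γ := hΓ.differentiable (by simp)
  have hΦ : ContDiff ℝ (⊤ : ℕ∞) (fderiv ℝ Γ) := hΓ.fderiv_right (by simp)
  -- replace the slice `deriv` by the full `fderiv`
  have hd : ∀ s t : ℝ, deriv (fun t' => Γ (t', s)) t = fderiv ℝ Γ (t, s) (1, 0) :=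
    fun s t => (hasDerivAt_fst_slice Γ (hΓd (t, s))).deriv
  simp only [hd]
  -- integrability of the integrands
  have hint : ∀ (α : (Fin N → ℝ) → ((Fin N → ℝ) →L[ℝ] ℝ)), ContDiff ℝ (⊤ : ℕ∞) α →
      ∀ s : ℝ, IntervalIntegrable
        (fun t => α (Γ (t, s)) (fderiv ℝ Γ (t, s) (1, 0))) volume a b := by
    intro α hα s
    have hc : Continuous fun p : ℝ × ℝ => α (Γ p) (fderiv ℝ Γ p (1, 0)) :=
      (((hα.comp hΓ).clm_apply (hΦ.clm_apply contDiff_const) :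
        ContDiff ℝ (⊤ : ℕ∞) _)).continuous
    exact (hc.comp (continuous_id.prodMk continuous_const)).intervalIntegrable a b
  -- apply the key lemma to `β = α₁ - α₂`
  set β : (Fin N → ℝ) → ((Fin N → ℝ) →L[ℝ] ℝ) := fun x => α₁ x - α₂ x with hβdef
  have hβ : ContDiff ℝ (⊤ : ℕ∞) β := hα₁.sub hα₂
  have hsymm : ∀ x u v, fderiv ℝ β x u v = fderiv ℝ β x v u := by
    intro x u v
    have h1 : fderiv ℝ β x = fderiv ℝ α₁ x - fderiv ℝ α₂ x :=
      fderiv_sub (hα₁.differentiable (by simp) x) (hα₂.differentiable (by simp) x)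
    rw [h1]
    simp only [ContinuousLinearMap.sub_apply]
    linarith [hdeq x u v]
  have hkey := key β hβ hsymm Γ hΓ a b hfix_a hfix_b s
  have hsub : ∀ s' : ℝ,
      (∫ t in a..b, β (Γ (t, s')) (fderiv ℝ Γ (t, s') (1, 0)))
        = (∫ t in a..b, α₁ (Γ (t, s')) (fderiv ℝ Γ (t, s') (1, 0)))
          - ∫ t in a..b, α₂ (Γ (t, s')) (fderiv ℝ Γ (t, s') (1, 0)) := by
    intro s'
    rw [← intervalIntegral.integral_sub (hint α₁ hα₁ s') (hint α₂ hα₂ s')]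
    simp [hβdef]
  rw [hsub s, hsub 0] at hkey
  linarith
end

section
/- Let α : ℝ^N → (ℝ^N →L[ℝ] ℝ) be a smooth 1-form, and Γ : ℝ × ℝ → ℝ^N a smooth variation with fixed endpoints (Γ(a,s) and Γ(b,s) independent of s). Then for every σ ≥ 0, ∫_a^b α(Γ(t,σ))(∂Γ/∂t(t,σ)) dt − ∫_a^b α(Γ(t,0))(∂Γ/∂t(t,0)) dt = ∫_0^σ ∫_a^b dα_{Γ(t,s)}(∂Γ/∂s(t,s), ∂Γ/∂t(t,s)) dt ds. -/
open MeasureTheory in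
lemma swap_helper {f : ℝ → ℝ → ℝ} (hf : Continuous (Function.uncurry f))
    {a b c d : ℝ} (hab : a ≤ b) (hcd : c ≤ d) :
    ∫ x in a..b, ∫ y in c..d, f x y = ∫ y in c..d, ∫ x in a..b, f x y := by
  rw [intervalIntegral.integral_of_le hab, intervalIntegral.integral_of_le hcd]
  simp only [intervalIntegral.integral_of_le hab, intervalIntegral.integral_of_le hcd]
  have h : Integrable (Function.uncurry f)
      ((volume.restrict (Set.Ioc a b)).prod (volume.restrict (Set.Ioc c d))) := by
    rw [Measure.prod_restrict]
    exact ((hf.continuousOn.integrableOn_compact (isCompact_Icc.prod isCompact_Icc)).mono_set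
      (Set.prod_mono Set.Ioc_subset_Icc_self Set.Ioc_subset_Icc_self))
  exact integral_integral_swap h

/-- Flat version of the computation in the proof of Theorem 3.1 of the paper:
for a fixed-endpoint variation, the difference of the actions of the boundary
curves equals the integral of `ω = dα` over the swept surface. -/
theorem stmt_4 (N : ℕ)
    (α : (Fin N → ℝ) → ((Fin N → ℝ) →L[ℝ] ℝ))
    (hα : ContDiff ℝ (⊤ : ℕ∞) α)
    (dα : (Fin N → ℝ) → (Fin N → ℝ) → (Fin N → ℝ) → ℝ)
    (hdα : ∀ x u v, dα x u v = fderiv ℝ α x u v - fderiv ℝ α x v u)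
    (Γ : ℝ × ℝ → (Fin N → ℝ))
    (hΓ : ContDiff ℝ (⊤ : ℕ∞) Γ)
    (a b : ℝ) (hab : a < b)
    (hfix_a : ∀ s : ℝ, Γ (a, s) = Γ (a, 0))
    (hfix_b : ∀ s : ℝ, Γ (b, s) = Γ (b, 0)) :
    ∀ σ : ℝ, 0 ≤ σ →
      (∫ t in a..b, α (Γ (t, σ)) (deriv (fun t' => Γ (t', σ)) t))
        - (∫ t in a..b, α (Γ (t, 0)) (deriv (fun t' => Γ (t', 0)) t))
      = ∫ s in (0:ℝ)..σ, ∫ t in a..b,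
          dα (Γ (t, s)) (deriv (fun s' => Γ (t, s')) s)
            (deriv (fun t' => Γ (t', s)) t) := by
  intro σ hσ
  have hab' : a ≤ b := hab.le
  set G := fderiv ℝ Γ with hGdef
  set M := fderiv ℝ G with hMdef
  have hΓd : Differentiable ℝ Γ := hΓ.differentiable (by simp)
  have hGc : ContDiff ℝ (⊤ : ℕ∞) G := hΓ.fderiv_right (by simp)
  have hGd : Differentiable ℝ G := hGc.differentiable (by simp)
  have hαd : Differentiable ℝ α := hα.differentiable (by simp)
  have hΓcont : Continuous Γ := hΓ.continuous
  have hGcont : Continuous G := hGc.continuous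
  have hMcont : Continuous M := hGc.continuous_fderiv (by simp)
  have hαcont : Continuous α := hα.continuous
  have hα'cont : Continuous (fderiv ℝ α) := hα.continuous_fderiv (by simp)
  -- curves t ↦ (t,s) and s ↦ (t,s)
  have hc1 : ∀ t s : ℝ, HasDerivAt (fun t' : ℝ => ((t', s) : ℝ × ℝ)) ((1, 0) : ℝ × ℝ) t :=
    fun t s => (hasDerivAt_id t).prodMk (hasDerivAt_const t s)
  have hc2 : ∀ t s : ℝ, HasDerivAt (fun s' : ℝ => ((t, s') : ℝ × ℝ)) ((0, 1) : ℝ × ℝ) s :=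
    fun t s => (hasDerivAt_const s t).prodMk (hasDerivAt_id s)
  -- partial derivatives of Γ
  have hD1 : ∀ t s : ℝ, HasDerivAt (fun t' => Γ (t', s)) (G (t, s) (1, 0)) t :=
    fun t s => (hΓd (t, s)).hasFDerivAt.comp_hasDerivAt t (hc1 t s)
  have hD2 : ∀ t s : ℝ, HasDerivAt (fun s' => Γ (t, s')) (G (t, s) (0, 1)) s :=
    fun t s => (hΓd (t, s)).hasFDerivAt.comp_hasDerivAt s (hc2 t s)
  -- partial derivatives of G
  have hG1 : ∀ t s : ℝ, HasDerivAt (fun t' => G (t', s)) (M (t, s) (1, 0)) t :=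
    fun t s => (hGd (t, s)).hasFDerivAt.comp_hasDerivAt t (hc1 t s)
  have hG2 : ∀ t s : ℝ, HasDerivAt (fun s' => G (t, s')) (M (t, s) (0, 1)) s :=
    fun t s => (hGd (t, s)).hasFDerivAt.comp_hasDerivAt s (hc2 t s)
  have hG1' : ∀ t s : ℝ, HasDerivAt (fun t' => G (t', s) (0, 1)) (M (t, s) (1, 0) (0, 1)) t :=
    fun t s => (ContinuousLinearMap.apply ℝ (Fin N → ℝ)
      ((0, 1) : ℝ × ℝ)).hasFDerivAt.comp_hasDerivAt t (hG1 t s)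
  have hG2' : ∀ t s : ℝ, HasDerivAt (fun s' => G (t, s') (1, 0)) (M (t, s) (0, 1) (1, 0)) s :=
    fun t s => (ContinuousLinearMap.apply ℝ (Fin N → ℝ)
      ((1, 0) : ℝ × ℝ)).hasFDerivAt.comp_hasDerivAt s (hG2 t s)
  -- Schwarz symmetry
  have hsymm : ∀ t s : ℝ, M (t, s) (0, 1) (1, 0) = M (t, s) (1, 0) (0, 1) :=
    fun t s => second_derivative_symmetric (fun y => (hΓd y).hasFDerivAt)
      ((hGd (t, s)).hasFDerivAt) _ _
  -- α ∘ Γ along the two curves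
  have hA1 : ∀ t s : ℝ, HasDerivAt (fun t' => α (Γ (t', s)))
      (fderiv ℝ α (Γ (t, s)) (G (t, s) (1, 0))) t :=
    fun t s => (hαd (Γ (t, s))).hasFDerivAt.comp_hasDerivAt t (hD1 t s)
  have hA2 : ∀ t s : ℝ, HasDerivAt (fun s' => α (Γ (t, s')))
      (fderiv ℝ α (Γ (t, s)) (G (t, s) (0, 1))) s :=
    fun t s => (hαd (Γ (t, s))).hasFDerivAt.comp_hasDerivAt s (hD2 t s)
  -- the key functions
  set F1 : ℝ × ℝ → ℝ := fun p => α (Γ p) (G p (1, 0)) with hF1def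
  set F2 : ℝ × ℝ → ℝ := fun p => α (Γ p) (G p (0, 1)) with hF2def
  set Q : ℝ × ℝ → ℝ := fun p =>
    fderiv ℝ α (Γ p) (G p (0, 1)) (G p (1, 0)) + α (Γ p) (M p (0, 1) (1, 0)) with hQdef
  set R : ℝ × ℝ → ℝ := fun p =>
    fderiv ℝ α (Γ p) (G p (1, 0)) (G p (0, 1)) + α (Γ p) (M p (1, 0) (0, 1)) with hRdef
  have hF1cont : Continuous F1 := (hαcont.comp hΓcont).clm_apply (hGcont.clm_apply continuous_const)
  have hF2cont : Continuous F2 := (hαcont.comp hΓcont).clm_apply (hGcont.clm_apply continuous_const)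
  have hQcont : Continuous Q :=
    (((hα'cont.comp hΓcont).clm_apply (hGcont.clm_apply continuous_const)).clm_apply
      (hGcont.clm_apply continuous_const)).add
      ((hαcont.comp hΓcont).clm_apply
        ((hMcont.clm_apply continuous_const).clm_apply continuous_const))
  have hRcont : Continuous R :=
    (((hα'cont.comp hΓcont).clm_apply (hGcont.clm_apply continuous_const)).clm_apply
      (hGcont.clm_apply continuous_const)).add
      ((hαcont.comp hΓcont).clm_apply
        ((hMcont.clm_apply continuous_const).clm_apply continuous_const))
  -- derivative of F1 in s is Q, derivative of F2 in t is R
  have hQder : ∀ t s : ℝ, HasDerivAt (fun s' => F1 (t, s')) (Q (t, s)) s :=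
    fun t s => (hA2 t s).clm_apply (hG2' t s)
  have hRder : ∀ t s : ℝ, HasDerivAt (fun t' => F2 (t', s)) (R (t, s)) t :=
    fun t s => (hA1 t s).clm_apply (hG1' t s)
  -- FTC in the s direction
  have hQfun : ∀ t : ℝ, (∫ s in (0:ℝ)..σ, Q (t, s)) = F1 (t, σ) - F1 (t, 0) := fun t =>
    intervalIntegral.integral_eq_sub_of_hasDerivAt (fun s _ => hQder t s)
      ((hQcont.comp (continuous_const.prodMk continuous_id)).intervalIntegrable 0 σ)
  -- FTC in the t direction, and endpoint vanishing
  have hEa : ∀ s : ℝ, G (a, s) (0, 1) = 0 := by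
    intro s
    have h2 : HasDerivAt (fun s' => Γ (a, s')) 0 s := by
      have he : (fun s' => Γ (a, s')) = fun _ => Γ (a, 0) := funext hfix_a
      rw [he]; exact hasDerivAt_const s _
    exact (hD2 a s).unique h2
  have hEb : ∀ s : ℝ, G (b, s) (0, 1) = 0 := by
    intro s
    have h2 : HasDerivAt (fun s' => Γ (b, s')) 0 s := by
      have he : (fun s' => Γ (b, s')) = fun _ => Γ (b, 0) := funext hfix_b
      rw [he]; exact hasDerivAt_const s _
    exact (hD2 b s).unique h2
  have hRfun : ∀ s : ℝ, (∫ t in a..b, R (t, s)) = 0 := by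
    intro s
    have := intervalIntegral.integral_eq_sub_of_hasDerivAt (fun t _ => hRder t s)
      ((hRcont.comp (continuous_id.prodMk continuous_const)).intervalIntegrable a b)
    rw [this]
    simp [hF2def, hEa s, hEb s]
  -- rewrite the LHS integrands
  have hL : ∀ s : ℝ, (∫ t in a..b, α (Γ (t, s)) (deriv (fun t' => Γ (t', s)) t))
      = ∫ t in a..b, F1 (t, s) := by
    intro s
    refine intervalIntegral.integral_congr fun t _ => ?_
    rw [(hD1 t s).deriv]
  -- rewrite the RHS integrand
  have hRHS : ∀ t s : ℝ, dα (Γ (t, s)) (deriv (fun s' => Γ (t, s')) s)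
      (deriv (fun t' => Γ (t', s)) t) = Q (t, s) - R (t, s) := by
    intro t s
    rw [(hD1 t s).deriv, (hD2 t s).deriv, hdα]
    simp only [hQdef, hRdef, hsymm t s]
    ring
  rw [hL σ, hL 0]
  have hQsc : ∀ t : ℝ, Continuous fun s => Q (t, s) :=
    fun t => hQcont.comp (continuous_const.prodMk continuous_id)
  calc (∫ t in a..b, F1 (t, σ)) - ∫ t in a..b, F1 (t, 0)
      = ∫ t in a..b, (F1 (t, σ) - F1 (t, 0)) :=
        (intervalIntegral.integral_sub
          (((hF1cont.comp (continuous_id.prodMk continuous_const) :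
              Continuous fun t => F1 (t, σ))).intervalIntegrable a b)
          (((hF1cont.comp (continuous_id.prodMk continuous_const) :
              Continuous fun t => F1 (t, 0))).intervalIntegrable a b)).symm
    _ = ∫ t in a..b, ∫ s in (0:ℝ)..σ, Q (t, s) :=
        (intervalIntegral.integral_congr fun t _ => (hQfun t).symm)
    _ = ∫ s in (0:ℝ)..σ, ∫ t in a..b, Q (t, s) := by
        refine swap_helper ?_ hab' hσ
        exact hQcont
    _ = ∫ s in (0:ℝ)..σ, ∫ t in a..b, (Q (t, s) - R (t, s)) := by
        refine intervalIntegral.integral_congr fun s _ => ?_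
        have h : (∫ t in a..b, (Q (t, s) - R (t, s)))
            = (∫ t in a..b, Q (t, s)) - ∫ t in a..b, R (t, s) := intervalIntegral.integral_sub
          (((hQcont.comp (continuous_id.prodMk continuous_const) :
              Continuous fun t => Q (t, s))).intervalIntegrable a b)
          (((hRcont.comp (continuous_id.prodMk continuous_const) :
              Continuous fun t => R (t, s))).intervalIntegrable a b)
        rw [h, hRfun s, sub_zero]
    _ = ∫ s in (0:ℝ)..σ, ∫ t in a..b,
          dα (Γ (t, s)) (deriv (fun s' => Γ (t, s')) s) (deriv (fun t' => Γ (t', s)) t) := by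
        refine intervalIntegral.integral_congr fun s _ => ?_
        exact intervalIntegral.integral_congr fun t _ => (hRHS t s).symm
end

section
/- Let n ≥ 1, γ ≠ 0, h ∈ ℝ. Define H(q,p) = ½‖p‖² − γ/‖q‖ on (ℝ^n \ {0}) × ℝ^n and F(q,p) = (‖p‖² − 2h)²·‖q‖²/(8γ²) on ℝ^n × ℝ^n. If q ≠ 0 and H(q,p) = h, then the Fréchet derivative of F at (q,p) equals (‖q‖/γ) • (the Fréchet derivative of H at (q,p)). -/
/-!
Away from `q = 0` the regularized Hamiltonian is a function of the Kepler one: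
`F = (‖q‖ (H - h) + γ)² / (2γ²)`. Differentiating a square `(g (f - c) + a)²` at a point where
`f = c` kills every term except `2 a g · df`; with `a = γ`, `g = ‖q‖`, `f = H`, `c = h` this is
`(‖q‖/γ) · dH`.
-/

open Filter Topology

lemma hasFDerivAt_sq_mul_sub_add {E : Type*} [NormedAddCommGroup E] [NormedSpace ℝ E]
    {f g : E → ℝ} {f' g' : E →L[ℝ] ℝ} {x : E} {c a : ℝ}
    (hf : HasFDerivAt f f' x) (hg : HasFDerivAt g g' x) (hfx : f x = c) :
    HasFDerivAt (fun y => (g y * (f y - c) + a) ^ 2) ((2 * a * g x) • f') x := by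
  refine (((hg.mul (hf.sub_const c)).add_const a).pow 2).congr_fderiv ?_
  simp only [Pi.mul_apply, hfx, sub_self, mul_zero, zero_add, zero_smul, add_zero,
    smul_smul, nsmul_eq_mul]
  ring_nf

lemma differentiableAt_kepler_hamiltonian {E : Type*} [NormedAddCommGroup E]
    [InnerProductSpace ℝ E] (γ : ℝ) {q : E} (p : E) (hq : q ≠ 0) :
    DifferentiableAt ℝ (fun x : E × E => (1 / 2 : ℝ) * ‖x.2‖ ^ 2 - γ / ‖x.1‖) (q, p) :=
  ((differentiableAt_snd.norm_sq ℝ).const_mul _).sub <|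
    ((differentiableAt_fst.norm ℝ hq).inv (norm_ne_zero_iff.mpr hq)).const_mul γ

lemma kepler_regularized_eq_sq_mul_sub_add {r s γ h : ℝ} (hr : r ≠ 0) :
    (s ^ 2 - 2 * h) ^ 2 * r ^ 2 / (8 * γ ^ 2)
      = (r * (1 / 2 * s ^ 2 - γ / r - h) + γ) ^ 2 * (2 * γ ^ 2)⁻¹ := by
  field_simp
  ring

theorem stmt_18_general (n : ℕ) (γ h : ℝ) (hγ : γ ≠ 0)
    (H : EuclideanSpace ℝ (Fin n) × EuclideanSpace ℝ (Fin n) → ℝ)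
    (hH : ∀ x : EuclideanSpace ℝ (Fin n) × EuclideanSpace ℝ (Fin n),
      x.1 ≠ 0 → H x = (1/2 : ℝ) * ‖x.2‖^2 - γ / ‖x.1‖)
    (F : EuclideanSpace ℝ (Fin n) × EuclideanSpace ℝ (Fin n) → ℝ)
    (hF : ∀ x : EuclideanSpace ℝ (Fin n) × EuclideanSpace ℝ (Fin n),
      F x = (‖x.2‖^2 - 2 * h)^2 * ‖x.1‖^2 / (8 * γ^2)) :
    ∀ (q p : EuclideanSpace ℝ (Fin n)), q ≠ 0 → H (q, p) = h →
      fderiv ℝ F (q, p) = (‖q‖ / γ) • fderiv ℝ H (q, p) := by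
  intro q p hq hHq
  have hnear : ∀ᶠ x in 𝓝 (q, p), x.1 ≠ 0 := continuous_fst.continuousAt.eventually_ne hq
  have hH_diff : DifferentiableAt ℝ H (q, p) :=
    (differentiableAt_kepler_hamiltonian γ p hq).congr_of_eventuallyEq (hnear.mono hH)
  have hF_eq : F =ᶠ[𝓝 (q, p)] fun x => (‖x.1‖ * (H x - h) + γ) ^ 2 * (2 * γ ^ 2)⁻¹ :=
    hnear.mono fun x hx => by
      dsimp only
      rw [hF, hH x hx, kepler_regularized_eq_sq_mul_sub_add (norm_ne_zero_iff.mpr hx)]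
  have hN_diff : DifferentiableAt ℝ (fun x : EuclideanSpace ℝ (Fin n) × _ => ‖x.1‖) (q, p) :=
    differentiableAt_fst.norm ℝ hq
  have hF_deriv : HasFDerivAt (fun x => (‖x.1‖ * (H x - h) + γ) ^ 2 * (2 * γ ^ 2)⁻¹)
      ((2 * γ ^ 2)⁻¹ • (2 * γ * ‖q‖) • fderiv ℝ H (q, p)) (q, p) :=
    (hasFDerivAt_sq_mul_sub_add hH_diff.hasFDerivAt hN_diff.hasFDerivAt hHq).mul_const _
  rw [hF_eq.fderiv_eq, hF_deriv.fderiv, smul_smul]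
  congr 1
  field_simp

/-- Section 5.2 of the paper: on the Kepler energy surface
`H(q,p) = ½‖p‖² − γ/‖q‖ = h`, the Fréchet derivative of the regularized
Hamiltonian `F(q,p) = (‖p‖² − 2h)²‖q‖²/(8γ²)` equals `(‖q‖/γ) • DH(q,p)`,
i.e. `X_F = (|q|/γ) X_H = Z` along `M_h`. -/
theorem stmt_18 (n : ℕ) (hn : 1 ≤ n) (γ h : ℝ) (hγ : γ ≠ 0)
    (H : EuclideanSpace ℝ (Fin n) × EuclideanSpace ℝ (Fin n) → ℝ)
    (hH : ∀ x : EuclideanSpace ℝ (Fin n) × EuclideanSpace ℝ (Fin n),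
      x.1 ≠ 0 → H x = (1/2 : ℝ) * ‖x.2‖^2 - γ / ‖x.1‖)
    (F : EuclideanSpace ℝ (Fin n) × EuclideanSpace ℝ (Fin n) → ℝ)
    (hF : ∀ x : EuclideanSpace ℝ (Fin n) × EuclideanSpace ℝ (Fin n),
      F x = (‖x.2‖^2 - 2 * h)^2 * ‖x.1‖^2 / (8 * γ^2)) :
    ∀ (q p : EuclideanSpace ℝ (Fin n)), q ≠ 0 → H (q, p) = h →
      fderiv ℝ F (q, p) = (‖q‖ / γ) • fderiv ℝ H (q, p) :=
  stmt_18_general n γ h hγ H hH F hF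
end
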